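/- arXiv:2412.06502 — 5 statements merged into one kernel-verified Lean document; each statement's English description precedes it below -/
import Mathlib

section
/- Let 𝒳 be a domain of m×n LP problems that is weakly solution-wise bounded: there exists a bounded set Γ ⊆ ℝ^n × ℝ^m such that for every ξ = (p, A, b) ∈ 𝒳 there is (x, y) ∈ Γ with x ≥ 0, Ax = b, yᵀA ≥ pᵀ, and (yᵀA − pᵀ)x = 0. Then the optimal value function V is continuous on 𝒳: for every ξ ∈ 𝒳 and every sequence ξ(N) in 𝒳 converging to ξ, V(ξ(N)) → V(ξ). -/
open Matrix Filter Topology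

/-- An m×n LP problem (p, A, b): maximize pᵀx s.t. Ax = b, x ≥ 0. -/
abbrev LP (m n : ℕ) := (Fin n → ℝ) × Matrix (Fin m) (Fin n) ℝ × (Fin m → ℝ)

/-- The feasible set of the LP problem (p, A, b). -/
def Feas {m n : ℕ} (A : Matrix (Fin m) (Fin n) ℝ) (b : Fin m → ℝ) : Set (Fin n → ℝ) :=
  {x | (∀ j, 0 ≤ x j) ∧ A.mulVec x = b}

/-- The set of optimal solutions of the LP problem (p, A, b). -/
def Sol {m n : ℕ} (p : Fin n → ℝ) (A : Matrix (Fin m) (Fin n) ℝ) (b : Fin m → ℝ) :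
    Set (Fin n → ℝ) :=
  {x ∈ Feas A b | ∀ x' ∈ Feas A b, p ⬝ᵥ x' ≤ p ⬝ᵥ x}

/-- The KKT conditions for the pair (x, y) at the LP problem (p, A, b):
x ≥ 0, Ax = b, yᵀA ≥ pᵀ and (yᵀA − pᵀ)x = 0. -/
def KKT {m n : ℕ} (p : Fin n → ℝ) (A : Matrix (Fin m) (Fin n) ℝ) (b : Fin m → ℝ)
    (x : Fin n → ℝ) (y : Fin m → ℝ) : Prop :=
  (∀ j, 0 ≤ x j) ∧ A.mulVec x = b ∧ (∀ j, p j ≤ Matrix.vecMul y A j) ∧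
    (Matrix.vecMul y A - p) ⬝ᵥ x = 0

/-- Strong duality from the KKT conditions. -/
lemma kkt_value {m n : ℕ} {p : Fin n → ℝ} {A : Matrix (Fin m) (Fin n) ℝ} {b : Fin m → ℝ}
    {x : Fin n → ℝ} {y : Fin m → ℝ} (h : KKT p A b x y) : p ⬝ᵥ x = y ⬝ᵥ b := by
  obtain ⟨_, hAx, _, hcs⟩ := h
  rw [sub_dotProduct] at hcs
  have h1 : Matrix.vecMul y A ⬝ᵥ x = p ⬝ᵥ x := by linarith
  rw [← h1, ← Matrix.dotProduct_mulVec, hAx]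

/-- Weak duality: any feasible point has value bounded by a dual feasible value. -/
lemma feas_le {m n : ℕ} {p : Fin n → ℝ} {A : Matrix (Fin m) (Fin n) ℝ}
    {x' : Fin n → ℝ} {y : Fin m → ℝ} (hx' : ∀ j, 0 ≤ x' j)
    (hd : ∀ j, p j ≤ Matrix.vecMul y A j) :
    p ⬝ᵥ x' ≤ y ⬝ᵥ A.mulVec x' := by
  rw [Matrix.dotProduct_mulVec]
  exact Finset.sum_le_sum fun j _ => mul_le_mul_of_nonneg_right (hd j) (hx' j)

/-- A KKT point is an optimal solution. -/
lemma kkt_sol {m n : ℕ} {p : Fin n → ℝ} {A : Matrix (Fin m) (Fin n) ℝ} {b : Fin m → ℝ}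
    {x : Fin n → ℝ} {y : Fin m → ℝ} (h : KKT p A b x y) : x ∈ Sol p A b := by
  obtain ⟨hx, hAx, hd, hcs⟩ := h
  refine ⟨⟨hx, hAx⟩, fun x' hx' => ?_⟩
  calc p ⬝ᵥ x' ≤ y ⬝ᵥ A.mulVec x' := feas_le hx'.1 hd
    _ = y ⬝ᵥ b := by rw [hx'.2]
    _ = p ⬝ᵥ x := (kkt_value ⟨hx, hAx, hd, hcs⟩).symm

lemma sol_value_eq {m n : ℕ} {p : Fin n → ℝ} {A : Matrix (Fin m) (Fin n) ℝ} {b : Fin m → ℝ}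
    {x x' : Fin n → ℝ} (h : x ∈ Sol p A b) (h' : x' ∈ Sol p A b) : p ⬝ᵥ x = p ⬝ᵥ x' :=
  le_antisymm (h'.2 x h.1) (h.2 x' h'.1)

/-- Quantitative perturbation bound between values of two KKT points. -/
lemma kkt_le {m n : ℕ} {p p' : Fin n → ℝ} {A A' : Matrix (Fin m) (Fin n) ℝ}
    {b b' : Fin m → ℝ} {x x' : Fin n → ℝ} {y y' : Fin m → ℝ}
    (h : KKT p A b x y) (h' : KKT p' A' b' x' y') :
    p' ⬝ᵥ x' ≤ p ⬝ᵥ x +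
      ((p' - p) ⬝ᵥ x' + Matrix.vecMul y (A - A') ⬝ᵥ x' + (b' - b) ⬝ᵥ y) := by
  have h1 : p' ⬝ᵥ x' = (p' - p) ⬝ᵥ x' + p ⬝ᵥ x' := by rw [sub_dotProduct]; ring
  have h2 : p ⬝ᵥ x' ≤ y ⬝ᵥ A.mulVec x' := feas_le h'.1 h.2.2.1
  have h3 : y ⬝ᵥ A.mulVec x' =
      Matrix.vecMul y (A - A') ⬝ᵥ x' + y ⬝ᵥ b' := by
    rw [Matrix.vecMul_sub, sub_dotProduct, ← Matrix.dotProduct_mulVec,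
      ← Matrix.dotProduct_mulVec, h'.2.1]
    ring
  have h4 : y ⬝ᵥ b' = (b' - b) ⬝ᵥ y + p ⬝ᵥ x := by
    rw [kkt_value h, sub_dotProduct, dotProduct_comm b' y, dotProduct_comm b y]; ring
  linarith

/-- Dot product of a vanishing sequence with a bounded sequence tends to zero. -/
lemma dot_tendsto_zero {k : ℕ} {a b : ℕ → Fin k → ℝ} {C : ℝ}
    (ha : Tendsto a atTop (nhds 0)) (hb : ∀ N i, |b N i| ≤ C) :
    Tendsto (fun N => a N ⬝ᵥ b N) atTop (nhds 0) := by
  apply squeeze_zero_norm (a := fun N => ∑ i, |a N i| * C)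
  · intro N
    calc ‖a N ⬝ᵥ b N‖ = |∑ i, a N i * b N i| := rfl
      _ ≤ ∑ i, |a N i * b N i| := Finset.abs_sum_le_sum_abs _ _
      _ ≤ ∑ i, |a N i| * C := Finset.sum_le_sum fun i _ => by
          rw [abs_mul]
          exact mul_le_mul_of_nonneg_left (hb N i) (abs_nonneg _)
  · have h0 : (0 : ℝ) = ∑ _i : Fin k, |(0 : ℝ)| * C := by simp
    rw [h0]
    apply tendsto_finset_sum
    intro i _
    have hai : Tendsto (fun N => a N i) atTop (nhds 0) := by
      have := ((continuous_apply i).tendsto (0 : Fin k → ℝ)).comp ha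
      simpa [Function.comp_def] using this
    exact (hai.abs.mul_const C)

/-- If the domain 𝒳 is weakly solution-wise bounded (there is a bounded set Γ ⊆ ℝⁿ × ℝᵐ
meeting the set of KKT pairs of every ξ ∈ 𝒳), then the optimal value function V is
continuous on 𝒳: for every ξ ∈ 𝒳 and every sequence ξ(N) in 𝒳 converging to ξ,
V(ξ(N)) → V(ξ). -/
theorem value_continuous_of_weakly_solution_wise_bounded {m n : ℕ}
    (𝒳 : Set (LP m n)) (h𝒳 : 𝒳.Nonempty)
    (hdom : ∀ ξ ∈ 𝒳, (Sol ξ.1 ξ.2.1 ξ.2.2).Nonempty)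
    (Γ : Set ((Fin n → ℝ) × (Fin m → ℝ))) (hΓbd : Bornology.IsBounded Γ)
    (hΓ : ∀ ξ ∈ 𝒳, ∃ xy ∈ Γ, KKT ξ.1 ξ.2.1 ξ.2.2 xy.1 xy.2) :
    ∀ ξ ∈ 𝒳, ∀ ξN : ℕ → LP m n, (∀ N, ξN N ∈ 𝒳) →
      Tendsto ξN atTop (nhds ξ) →
      ∀ s ∈ Sol ξ.1 ξ.2.1 ξ.2.2,
      ∀ sN : ℕ → Fin n → ℝ, (∀ N, sN N ∈ Sol (ξN N).1 (ξN N).2.1 (ξN N).2.2) →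
      Tendsto (fun N => (ξN N).1 ⬝ᵥ sN N) atTop (nhds (ξ.1 ⬝ᵥ s)) := by
  intro ξ hξ ξN hξN hconv s hs sN hsN
  obtain ⟨p, A, b⟩ := ξ
  obtain ⟨⟨x₀, y₀⟩, _, hkkt₀⟩ := hΓ (p, A, b) hξ
  choose xy hxyΓ hkkt using fun N => hΓ (ξN N) (hξN N)
  set xN : ℕ → Fin n → ℝ := fun N => (xy N).1 with hxN
  set yN : ℕ → Fin m → ℝ := fun N => (xy N).2 with hyN
  -- bound on Γ
  obtain ⟨C, hC⟩ := hΓbd.exists_norm_le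
  have hxb : ∀ N j, |xN N j| ≤ C := fun N j =>
    le_trans (norm_le_pi_norm (xN N) j)
      (le_trans (norm_fst_le (xy N)) (hC _ (hxyΓ N)))
  have hyb : ∀ N i, |yN N i| ≤ C := fun N i =>
    le_trans (norm_le_pi_norm (yN N) i)
      (le_trans (norm_snd_le (xy N)) (hC _ (hxyΓ N)))
  -- component convergence
  have hp : Tendsto (fun N => (ξN N).1) atTop (nhds p) :=
    ((continuous_fst.tendsto _).comp hconv)
  have hA : Tendsto (fun N => (ξN N).2.1) atTop (nhds A) :=
    ((continuous_fst.tendsto _).comp ((continuous_snd.tendsto _).comp hconv))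
  have hb : Tendsto (fun N => (ξN N).2.2) atTop (nhds b) :=
    ((continuous_snd.tendsto _).comp ((continuous_snd.tendsto _).comp hconv))
  -- replace values by KKT-point values
  have hval : ∀ N, (ξN N).1 ⬝ᵥ sN N = (ξN N).1 ⬝ᵥ xN N := fun N =>
    sol_value_eq (hsN N) (kkt_sol (hkkt N))
  have hval0 : p ⬝ᵥ s = p ⬝ᵥ x₀ := sol_value_eq hs (kkt_sol hkkt₀)
  simp only [hval0]
  rw [tendsto_congr hval]
  -- the error terms
  set U : ℕ → ℝ := fun N =>
    ((ξN N).1 - p) ⬝ᵥ xN N + Matrix.vecMul y₀ (A - (ξN N).2.1) ⬝ᵥ xN N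
      + ((ξN N).2.2 - b) ⬝ᵥ y₀ with hU
  set L : ℕ → ℝ := fun N =>
    (p - (ξN N).1) ⬝ᵥ x₀ + Matrix.vecMul (yN N) ((ξN N).2.1 - A) ⬝ᵥ x₀
      + (b - (ξN N).2.2) ⬝ᵥ yN N with hL
  have hupper : ∀ N, (ξN N).1 ⬝ᵥ xN N ≤ p ⬝ᵥ x₀ + U N := fun N =>
    kkt_le hkkt₀ (hkkt N)
  have hlower : ∀ N, p ⬝ᵥ x₀ - L N ≤ (ξN N).1 ⬝ᵥ xN N := fun N => by
    have := kkt_le (hkkt N) hkkt₀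
    simp only [hL]
    linarith
  -- convergence of error terms to zero
  have hUo : Tendsto U atTop (nhds 0) := by
    have h1 : Tendsto (fun N => ((ξN N).1 - p) ⬝ᵥ xN N) atTop (nhds 0) := by
      apply dot_tendsto_zero (C := C) _ hxb
      have := hp.sub (tendsto_const_nhds (x := p))
      simpa using this
    have h2 : Tendsto (fun N => Matrix.vecMul y₀ (A - (ξN N).2.1) ⬝ᵥ xN N)
        atTop (nhds 0) := by
      apply dot_tendsto_zero (C := C) _ hxb
      have hc : Continuous fun M : Matrix (Fin m) (Fin n) ℝ => Matrix.vecMul y₀ M :=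
        continuous_const.matrix_vecMul continuous_id
      have := (hc.tendsto (A - A)).comp
        ((tendsto_const_nhds (x := A)).sub hA)
      simpa [Function.comp_def] using this
    have h3 : Tendsto (fun N => ((ξN N).2.2 - b) ⬝ᵥ y₀) atTop (nhds 0) := by
      apply dot_tendsto_zero (C := ‖y₀‖) _ (fun _ i => norm_le_pi_norm y₀ i)
      have := hb.sub (tendsto_const_nhds (x := b))
      simpa using this
    have := (h1.add h2).add h3
    simpa only [add_zero] using this
  have hLo : Tendsto L atTop (nhds 0) := by
    have h1 : Tendsto (fun N => (p - (ξN N).1) ⬝ᵥ x₀) atTop (nhds 0) := by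
      apply dot_tendsto_zero (C := ‖x₀‖) _ (fun _ j => norm_le_pi_norm x₀ j)
      have := (tendsto_const_nhds (x := p)).sub hp
      simpa using this
    have h2 : Tendsto (fun N => Matrix.vecMul (yN N) ((ξN N).2.1 - A) ⬝ᵥ x₀)
        atTop (nhds 0) := by
      have heq : ∀ N, Matrix.vecMul (yN N) ((ξN N).2.1 - A) ⬝ᵥ x₀
          = (((ξN N).2.1 - A).mulVec x₀) ⬝ᵥ yN N := fun N => by
        rw [← Matrix.dotProduct_mulVec, dotProduct_comm]
      rw [tendsto_congr heq]
      apply dot_tendsto_zero (C := C) _ hyb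
      have hc : Continuous fun M : Matrix (Fin m) (Fin n) ℝ => M.mulVec x₀ :=
        continuous_id.matrix_mulVec continuous_const
      have := (hc.tendsto (A - A)).comp (hA.sub (tendsto_const_nhds (x := A)))
      simpa [Function.comp_def] using this
    have h3 : Tendsto (fun N => (b - (ξN N).2.2) ⬝ᵥ yN N) atTop (nhds 0) := by
      apply dot_tendsto_zero (C := C) _ hyb
      have := (tendsto_const_nhds (x := b)).sub hb
      simpa using this
    have := (h1.add h2).add h3
    simpa only [add_zero] using this
  have htU : Tendsto (fun N => p ⬝ᵥ x₀ + U N) atTop (nhds (p ⬝ᵥ x₀)) := by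
    have := (tendsto_const_nhds (x := p ⬝ᵥ x₀) (f := atTop)).add hUo
    simpa using this
  have htL : Tendsto (fun N => p ⬝ᵥ x₀ - L N) atTop (nhds (p ⬝ᵥ x₀)) := by
    have := (tendsto_const_nhds (x := p ⬝ᵥ x₀) (f := atTop)).sub hLo
    simpa using this
  exact tendsto_of_tendsto_of_tendsto_of_le_of_le htL htU hlower hupper
end

section
/- Let 𝒳 be a domain of m×n LP problems on which both the objective vector and the constraint matrix are fixed: there exist p ∈ ℝ^n and an m×n matrix A such that every ξ ∈ 𝒳 has the form (p, A, b(ξ)). Then the optimal value function V is continuous on 𝒳: for every ξ ∈ 𝒳 and every sequence ξ(N) in 𝒳 converging to ξ (i.e. b(ξ(N)) → b(ξ)), V(ξ(N)) → V(ξ). -/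
open Matrix Filter Topology

section Poly

variable {V W : Type} [AddCommGroup V] [Module ℝ V] [AddCommGroup W] [Module ℝ W]

/-- A set is a polyhedral cone if it is the solution set of finitely many
homogeneous linear inequalities. -/
def IsPolyCone (S : Set V) : Prop :=
  ∃ (ι : Type) (_ : Fintype ι) (f : ι → V →ₗ[ℝ] ℝ), S = {x | ∀ i, f i x ≤ 0}

lemma IsPolyCone.preimage {S : Set W} (h : IsPolyCone S) (f : V →ₗ[ℝ] W) :
    IsPolyCone (f ⁻¹' S) := by
  obtain ⟨ι, hι, g, rfl⟩ := h
  exact ⟨ι, hι, fun i => (g i).comp f, rfl⟩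

/-- Fourier–Motzkin elimination of one variable. -/
lemma IsPolyCone.exists_fst {S : Set (ℝ × W)} (h : IsPolyCone S) :
    IsPolyCone {w | ∃ t : ℝ, (t, w) ∈ S} := by
  classical
  obtain ⟨ι, hι, f, rfl⟩ := h
  set a : ι → ℝ := fun i => f i (1, 0) with ha
  set g : ι → W →ₗ[ℝ] ℝ := fun i => (f i).comp (LinearMap.inr ℝ ℝ W) with hg
  have key : ∀ (i : ι) (t : ℝ) (w : W), f i (t, w) = a i * t + g i w := by
    intro i t w
    have h1 : (t, w) = t • ((1:ℝ), (0:W)) + ((0:ℝ), w) := by simp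
    rw [h1, map_add, _root_.map_smul]
    simp [ha, hg, mul_comm]
  refine ⟨ι × ι, inferInstance, fun q =>
    if 0 < a q.1 ∧ a q.2 < 0 then a q.1 • g q.2 - a q.2 • g q.1
    else if a q.1 = 0 ∧ q.1 = q.2 then g q.1 else 0, ?_⟩
  ext w
  simp only [Set.mem_setOf_eq]
  constructor
  · rintro ⟨t, ht⟩ q
    obtain ⟨i, j⟩ := q
    have Hi : a i * t + g i w ≤ 0 := by rw [← key]; exact ht i
    have Hj : a j * t + g j w ≤ 0 := by rw [← key]; exact ht j
    split_ifs with h1 h2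
    · obtain ⟨hi, hj⟩ := h1
      simp only [LinearMap.sub_apply, LinearMap.smul_apply, smul_eq_mul]
      nlinarith
    · obtain ⟨hi, -⟩ := h2
      rw [hi] at Hi; linarith
    · simp
  · intro hw
    have hzero : ∀ i, a i = 0 → g i w ≤ 0 := by
      intro i hi
      have := hw (i, i)
      simp only [hi, lt_irrefl, and_false, false_and, if_false, if_true, and_self,
        lt_self_iff_false, true_and, if_pos rfl] at this
      simpa using this
    have hpair : ∀ i j, 0 < a i → a j < 0 → a i * g j w ≤ a j * g i w := by
      intro i j hi hj
      have := hw (i, j)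
      rw [if_pos ⟨hi, hj⟩] at this
      simp only [LinearMap.sub_apply, LinearMap.smul_apply, smul_eq_mul] at this
      linarith
    set Pos : Finset ι := Finset.univ.filter (fun i => 0 < a i) with hPos
    set Neg : Finset ι := Finset.univ.filter (fun i => a i < 0) with hNeg
    by_cases hP : Pos.Nonempty
    · refine ⟨Pos.inf' hP (fun i => -(g i w) / a i), fun i => ?_⟩
      rw [key]
      rcases lt_trichotomy (a i) 0 with hi | hi | hi
      · have hle : ∀ j ∈ Pos, -(g i w) / a i ≤ -(g j w) / a j := by
          intro j hj
          rw [hPos, Finset.mem_filter] at hj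
          have hp := hpair j i hj.2 hi
          have h1 : -(g i w) / a i = g i w / (-(a i)) := by
            rw [div_neg, neg_div]
          rw [h1, div_le_div_iff₀ (by linarith) hj.2]
          nlinarith
        have h2 := Finset.le_inf' hP _ hle
        have h3 : a i * (Pos.inf' hP fun i => -(g i w) / a i) ≤ a i * (-(g i w) / a i) :=
          mul_le_mul_of_nonpos_left h2 (le_of_lt hi)
        have h4 : a i * (-(g i w) / a i) = -(g i w) := by
          rw [mul_comm, div_mul_eq_mul_div, mul_div_assoc, div_self (ne_of_lt hi), mul_one]
        linarith
      · have := hzero i hi; rw [hi]; linarith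
      · have hmem : i ∈ Pos := by rw [hPos, Finset.mem_filter]; exact ⟨Finset.mem_univ _, hi⟩
        have h2 : Pos.inf' hP (fun i => -(g i w) / a i) ≤ -(g i w) / a i :=
          Finset.inf'_le _ hmem
        have h3 := (le_div_iff₀ hi).mp h2
        linarith
    · by_cases hN : Neg.Nonempty
      · refine ⟨Neg.sup' hN (fun j => -(g j w) / a j), fun i => ?_⟩
        rw [key]
        rcases lt_trichotomy (a i) 0 with hi | hi | hi
        · have hmem : i ∈ Neg := by rw [hNeg, Finset.mem_filter]; exact ⟨Finset.mem_univ _, hi⟩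
          have h2 : -(g i w) / a i ≤ Neg.sup' hN (fun j => -(g j w) / a j) :=
            Finset.le_sup' (fun j => -(g j w) / a j) hmem
          have h3 := (div_le_iff_of_neg hi).mp h2
          linarith
        · have := hzero i hi; rw [hi]; linarith
        · exact absurd ⟨i, by rw [hPos, Finset.mem_filter]; exact ⟨Finset.mem_univ _, hi⟩⟩ hP
      · refine ⟨0, fun i => ?_⟩
        rw [key]
        rcases lt_trichotomy (a i) 0 with hi | hi | hi
        · exact absurd ⟨i, by rw [hNeg, Finset.mem_filter]; exact ⟨Finset.mem_univ _, hi⟩⟩ hN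
        · have := hzero i hi; rw [hi]; linarith
        · exact absurd ⟨i, by rw [hPos, Finset.mem_filter]; exact ⟨Finset.mem_univ _, hi⟩⟩ hP

end Poly

section Proj

variable {W : Type} [AddCommGroup W] [Module ℝ W]

/-- `Fin.cons` as a linear map. -/
noncomputable def consL (n : ℕ) : ℝ × (Fin n → ℝ) →ₗ[ℝ] (Fin (n + 1) → ℝ) :=
  LinearMap.pi (fun i => Fin.cases (LinearMap.fst ℝ ℝ (Fin n → ℝ))
    (fun j => (LinearMap.proj j).comp (LinearMap.snd ℝ ℝ (Fin n → ℝ))) i)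

lemma consL_apply (n : ℕ) (t : ℝ) (x : Fin n → ℝ) : consL n (t, x) = Fin.cons t x := by
  funext i
  induction i using Fin.cases with
  | zero => simp [consL]
  | succ j => simp [consL]

lemma IsPolyCone.exists_pi : ∀ (n : ℕ) (S : Set ((Fin n → ℝ) × W)), IsPolyCone S →
    IsPolyCone {w | ∃ x, (x, w) ∈ S} := by
  intro n
  induction n with
  | zero =>
    intro S hS
    have h : {w | ∃ x, (x, w) ∈ S} =
        (LinearMap.prod (0 : W →ₗ[ℝ] Fin 0 → ℝ) LinearMap.id) ⁻¹' S := by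
      ext w
      constructor
      · rintro ⟨x, hx⟩
        have hx0 : x = 0 := funext fun i => i.elim0
        rw [hx0] at hx
        exact hx
      · intro h
        exact ⟨0, h⟩
    rw [h]
    exact hS.preimage _
  | succ n ih =>
    intro S hS
    set ψ : ℝ × ((Fin n → ℝ) × W) →ₗ[ℝ] (Fin (n + 1) → ℝ) × W :=
      LinearMap.prod
        ((consL n).comp (LinearMap.prod (LinearMap.fst ℝ ℝ ((Fin n → ℝ) × W))
          ((LinearMap.fst ℝ (Fin n → ℝ) W).comp (LinearMap.snd ℝ ℝ ((Fin n → ℝ) × W)))))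
        ((LinearMap.snd ℝ (Fin n → ℝ) W).comp (LinearMap.snd ℝ ℝ ((Fin n → ℝ) × W))) with hψ
    have hψa : ∀ (t : ℝ) (x : Fin n → ℝ) (w : W), ψ (t, (x, w)) = (Fin.cons t x, w) := by
      intro t x w
      simp [hψ, consL_apply]
    have hT : IsPolyCone {q : (Fin n → ℝ) × W | ∃ t, (t, q) ∈ ψ ⁻¹' S} :=
      (hS.preimage ψ).exists_fst
    have hR := ih _ hT
    have h : {w | ∃ x, (x, w) ∈ S} = {w | ∃ x', (x', w) ∈ {q : (Fin n → ℝ) × W | ∃ t, (t, q) ∈ ψ ⁻¹' S}} := by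
      ext w
      constructor
      · rintro ⟨x, hx⟩
        refine ⟨Fin.tail x, x 0, ?_⟩
        simp only [Set.mem_preimage, hψa, Fin.cons_self_tail]
        exact hx
      · rintro ⟨x', t, h⟩
        simp only [Set.mem_preimage, hψa] at h
        exact ⟨Fin.cons t x', h⟩
    rw [h]
    exact hR

end Proj

lemma continuous_finset_inf' {ι β : Type*} [TopologicalSpace β] {s : Finset ι}
    (hs : s.Nonempty) {g : ι → β → ℝ} (hg : ∀ i, Continuous (g i)) :
    Continuous fun b => s.inf' hs (fun i => g i b) := by
  induction hs using Finset.Nonempty.cons_induction with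
  | singleton a => simpa using hg a
  | cons a s ha hs ih =>
    have : (fun b => (Finset.cons a s ha).inf' (Finset.cons_nonempty ha) (fun i => g i b)) =
        fun b => min (g a b) (s.inf' hs (fun i => g i b)) := by
      funext b
      rw [Finset.inf'_cons]
    rw [this]
    exact (hg a).min ih

set_option maxHeartbeats 1000000 in
/-- If on the domain 𝒳 both the objective vector and constraint matrix are fixed
(every ξ ∈ 𝒳 has the form (p, A, b(ξ))), then the optimal value function V is continuous
on 𝒳: for every ξ ∈ 𝒳 and every sequence ξ(N) in 𝒳 converging to ξ, V(ξ(N)) → V(ξ). -/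
theorem value_continuous_of_fixed_p_A {m n : ℕ}
    (𝒳 : Set (LP m n)) (h𝒳 : 𝒳.Nonempty)
    (hdom : ∀ ξ ∈ 𝒳, (Sol ξ.1 ξ.2.1 ξ.2.2).Nonempty)
    (p : Fin n → ℝ) (A : Matrix (Fin m) (Fin n) ℝ)
    (hfix : ∀ ξ ∈ 𝒳, ξ.1 = p ∧ ξ.2.1 = A) :
    ∀ ξ ∈ 𝒳, ∀ ξN : ℕ → LP m n, (∀ N, ξN N ∈ 𝒳) →
      Tendsto ξN atTop (nhds ξ) →
      ∀ s ∈ Sol ξ.1 ξ.2.1 ξ.2.2,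
      ∀ sN : ℕ → Fin n → ℝ, (∀ N, sN N ∈ Sol (ξN N).1 (ξN N).2.1 (ξN N).2.2) →
      Tendsto (fun N => (ξN N).1 ⬝ᵥ sN N) atTop (nhds (ξ.1 ⬝ᵥ s)) := by
  classical
  intro ξ hξ ξN hξN hconv s hs sN hsN
  obtain ⟨hp1, hA1⟩ := hfix ξ hξ
  rw [hp1, hA1] at hs
  -- the linear map L x = (A x, p ⬝ᵥ x)
  set P : (Fin n → ℝ) →ₗ[ℝ] ℝ :=
    { toFun := fun x => p ⬝ᵥ x
      map_add' := fun x y => dotProduct_add p x y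
      map_smul' := fun c x => by simp [dotProduct_smul, smul_eq_mul] } with hPdef
  set L : (Fin n → ℝ) →ₗ[ℝ] (Fin m → ℝ) × ℝ := LinearMap.prod A.mulVecLin P with hLdef
  have hLapp : ∀ x, L x = (A.mulVec x, p ⬝ᵥ x) := fun x => by
    simp only [hLdef, LinearMap.prod_apply, Matrix.mulVecLin_apply, Pi.prod]
    rfl
  set G : Set ((Fin n → ℝ) × ((Fin m → ℝ) × ℝ)) :=
    {z | (∀ j, 0 ≤ z.1 j) ∧ z.2 = L z.1} with hGdef
  -- `G` is a polyhedral cone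
  have hGpoly : IsPolyCone G := by
    set coord : Fin m ⊕ Unit → (((Fin m → ℝ) × ℝ) →ₗ[ℝ] ℝ) :=
      Sum.elim (fun j => (LinearMap.proj j).comp (LinearMap.fst ℝ (Fin m → ℝ) ℝ))
        (fun _ => LinearMap.snd ℝ (Fin m → ℝ) ℝ) with hcoord
    set D : ((Fin n → ℝ) × ((Fin m → ℝ) × ℝ)) →ₗ[ℝ] ((Fin m → ℝ) × ℝ) :=
      LinearMap.snd ℝ (Fin n → ℝ) ((Fin m → ℝ) × ℝ) -
        L.comp (LinearMap.fst ℝ (Fin n → ℝ) ((Fin m → ℝ) × ℝ)) with hD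
    have hDapp : ∀ z : (Fin n → ℝ) × ((Fin m → ℝ) × ℝ), D z = z.2 - L z.1 := fun z => rfl
    refine ⟨Fin n ⊕ ((Fin m ⊕ Unit) × Bool), inferInstance,
      Sum.elim (fun j => -((LinearMap.proj j).comp
          (LinearMap.fst ℝ (Fin n → ℝ) ((Fin m → ℝ) × ℝ))))
        (fun q => if q.2 then (coord q.1).comp D else -((coord q.1).comp D)), ?_⟩
    ext z
    simp only [hGdef, Set.mem_setOf_eq]
    constructor
    · rintro ⟨hpos, heq⟩ i
      have hDz : D z = 0 := by rw [hDapp, heq, sub_self]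
      cases i with
      | inl j => simpa using hpos j
      | inr q =>
        rcases q with ⟨c, b⟩
        cases b <;> simp [hDz]
    · intro h
      constructor
      · intro j
        have := h (Sum.inl j)
        simpa using this
      · have h1 : ∀ q : Fin m ⊕ Unit, coord q (D z) = 0 := by
          intro q
          have ht := h (Sum.inr (q, true))
          have hf := h (Sum.inr (q, false))
          simp at ht hf
          linarith
        have hDz : D z = 0 := by
          have hfst : (D z).1 = 0 := funext fun j => h1 (Sum.inl j)
          have hsnd : (D z).2 = 0 := h1 (Sum.inr ())
          exact Prod.ext hfst hsnd
        rw [hDapp] at hDz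
        exact (sub_eq_zero.mp hDz)
  -- the cone of achievable (b, value) pairs is polyhedral
  obtain ⟨ι, hι, f, hC⟩ := IsPolyCone.exists_pi n G hGpoly
  set d : ι → ℝ := fun i => f i (0, 1) with hd
  set c : ι → (Fin m → ℝ) →ₗ[ℝ] ℝ := fun i => (f i).comp (LinearMap.inl ℝ (Fin m → ℝ) ℝ)
    with hc
  have key : ∀ (i : ι) (b : Fin m → ℝ) (t : ℝ), f i (b, t) = c i b + d i * t := by
    intro i b t
    have h1 : (b, t) = ((b, 0) : (Fin m → ℝ) × ℝ) + t • ((0 : Fin m → ℝ), (1:ℝ)) := by simp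
    rw [h1, map_add, _root_.map_smul]
    simp [hc, hd, mul_comm]
  -- membership in the cone
  have hmemiff : ∀ (b : Fin m → ℝ) (t : ℝ),
      (∃ x, (∀ j, 0 ≤ x j) ∧ A.mulVec x = b ∧ p ⬝ᵥ x = t) ↔ ∀ i, f i (b, t) ≤ 0 := by
    intro b t
    constructor
    · rintro ⟨x, hx1, hx2, hx3⟩
      have hmem : ((b, t) : (Fin m → ℝ) × ℝ) ∈ {w | ∃ x, (x, w) ∈ G} := by
        refine ⟨x, hx1, ?_⟩
        rw [hLapp, ← hx2, ← hx3]
      rw [hC] at hmem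
      exact hmem
    · intro h
      have hmem : ((b, t) : (Fin m → ℝ) × ℝ) ∈ {w | ∃ x, (x, w) ∈ G} := by
        rw [hC]; exact h
      obtain ⟨x, hx1, hx2⟩ := hmem
      rw [hLapp] at hx2
      exact ⟨x, hx1, (congrArg Prod.fst hx2).symm, (congrArg Prod.snd hx2).symm⟩
  set Iplus : Finset ι := Finset.univ.filter (fun i => 0 < d i) with hIplus
  obtain ⟨⟨hspos, hseq⟩, hsopt⟩ := hs
  -- `Iplus` is nonempty
  have hne : Iplus.Nonempty := by
    by_contra hne
    have hforall : ∀ i, d i ≤ 0 := by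
      intro i
      by_contra hdi
      push_neg at hdi
      exact hne ⟨i, by rw [hIplus, Finset.mem_filter]; exact ⟨Finset.mem_univ _, hdi⟩⟩
    have h1 : ∀ i, f i (ξ.2.2, p ⬝ᵥ s) ≤ 0 := (hmemiff _ _).1 ⟨s, hspos, hseq, rfl⟩
    have h2 : ∀ i, f i (ξ.2.2, p ⬝ᵥ s + 1) ≤ 0 := by
      intro i
      have := h1 i
      rw [key] at this ⊢
      nlinarith [hforall i]
    obtain ⟨x, hx1, hx2, hx3⟩ := (hmemiff _ _).2 h2
    have := hsopt x ⟨hx1, hx2⟩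
    rw [hx3] at this
    linarith
  -- the optimal value equals a finite min of linear functions of b
  set F : (Fin m → ℝ) → ℝ := fun b => Iplus.inf' hne (fun i => -(c i b) / d i) with hF
  have hval : ∀ (b : Fin m → ℝ) (s' : Fin n → ℝ), s' ∈ Sol p A b → p ⬝ᵥ s' = F b := by
    intro b s' hs'
    obtain ⟨⟨h1, h2⟩, hopt⟩ := hs'
    have hmem : ∀ i, f i (b, p ⬝ᵥ s') ≤ 0 := (hmemiff _ _).1 ⟨s', h1, h2, rfl⟩
    have hub : ∀ i ∈ Iplus, p ⬝ᵥ s' ≤ -(c i b) / d i := by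
      intro i hi
      rw [hIplus, Finset.mem_filter] at hi
      have hk := hmem i
      rw [key] at hk
      rw [le_div_iff₀ hi.2]
      linarith
    have hlow : p ⬝ᵥ s' ≤ F b := Finset.le_inf' hne _ hub
    have hFC : ∀ i, f i (b, F b) ≤ 0 := by
      intro i
      rw [key]
      rcases lt_trichotomy (d i) 0 with hdi | hdi | hdi
      · have hk := hmem i; rw [key] at hk; nlinarith
      · have hk := hmem i; rw [key] at hk; rw [hdi] at hk ⊢; linarith
      · have hFle : F b ≤ -(c i b) / d i :=
          Finset.inf'_le _ (by rw [hIplus, Finset.mem_filter]; exact ⟨Finset.mem_univ _, hdi⟩)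
        have := (le_div_iff₀ hdi).mp hFle
        linarith
    obtain ⟨x, hx1, hx2, hx3⟩ := (hmemiff _ _).2 hFC
    have hle := hopt x ⟨hx1, hx2⟩
    rw [hx3] at hle
    linarith
  -- conclude by continuity of `F`
  have hgoal1 : ∀ N, (ξN N).1 ⬝ᵥ sN N = F ((ξN N).2.2) := by
    intro N
    obtain ⟨e1, e2⟩ := hfix (ξN N) (hξN N)
    have h := hsN N
    rw [e1, e2] at h
    rw [e1]
    exact hval _ _ h
  have hgoal2 : ξ.1 ⬝ᵥ s = F ξ.2.2 := by
    rw [hp1]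
    exact hval _ _ ⟨⟨hspos, hseq⟩, hsopt⟩
  rw [hgoal2]
  have hcont : Continuous F := by
    refine continuous_finset_inf' hne (fun i => ?_)
    exact ((c i).continuous_of_finiteDimensional.neg).div_const _
  have hb : Tendsto (fun N => (ξN N).2.2) atTop (nhds ξ.2.2) :=
    ((continuous_snd.comp continuous_snd).tendsto ξ).comp hconv
  have hT : Tendsto (fun N => F ((ξN N).2.2)) atTop (nhds (F ξ.2.2)) :=
    (hcont.tendsto _).comp hb
  exact hT.congr fun N => (hgoal1 N).symm
end

section
/- Let 𝒳 be a domain of m×n LP problems that is weakly solution-wise bounded for the primal (there exists a bounded set Ω ⊆ ℝ^n such that Ω ∩ S(ξ) ≠ ∅ for every ξ ∈ 𝒳) and on which the solution correspondence S is upper semicontinuous. Then the optimal value function V is continuous on 𝒳: for every ξ ∈ 𝒳 and every sequence ξ(N) in 𝒳 converging to ξ, V(ξ(N)) → V(ξ). -/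
open Matrix Filter Topology

/-- If the domain 𝒳 is weakly solution-wise bounded for the primal (a bounded Ω ⊆ ℝⁿ meets
S(ξ) for all ξ ∈ 𝒳) and the solution correspondence S is upper semicontinuous on 𝒳, then
the optimal value function V is continuous on 𝒳. -/
theorem value_continuous_of_primal_bounded_and_usc {m n : ℕ}
    (𝒳 : Set (LP m n)) (h𝒳 : 𝒳.Nonempty)
    (hdom : ∀ ξ ∈ 𝒳, (Sol ξ.1 ξ.2.1 ξ.2.2).Nonempty)
    (Ω : Set (Fin n → ℝ)) (hΩbd : Bornology.IsBounded Ω)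
    (hΩ : ∀ ξ ∈ 𝒳, (Ω ∩ Sol ξ.1 ξ.2.1 ξ.2.2).Nonempty)
    (husc : ∀ ξ ∈ 𝒳, ∀ ξN : ℕ → LP m n, (∀ N, ξN N ∈ 𝒳) →
      Tendsto ξN atTop (nhds ξ) →
      ∀ x : Fin n → ℝ, ∀ xN : ℕ → Fin n → ℝ,
      Tendsto xN atTop (nhds x) →
      (∀ N, xN N ∈ Sol (ξN N).1 (ξN N).2.1 (ξN N).2.2) →
      x ∈ Sol ξ.1 ξ.2.1 ξ.2.2) :
    ∀ ξ ∈ 𝒳, ∀ ξN : ℕ → LP m n, (∀ N, ξN N ∈ 𝒳) →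
      Tendsto ξN atTop (nhds ξ) →
      ∀ s ∈ Sol ξ.1 ξ.2.1 ξ.2.2,
      ∀ sN : ℕ → Fin n → ℝ, (∀ N, sN N ∈ Sol (ξN N).1 (ξN N).2.1 (ξN N).2.2) →
      Tendsto (fun N => (ξN N).1 ⬝ᵥ sN N) atTop (nhds (ξ.1 ⬝ᵥ s)) := by
  intro ξ hξ ξN hξN hconv s hs sN hsN
  -- choose bounded solutions xN ∈ Ω ∩ Sol(ξN)
  choose xN hxΩ hxSol using fun N => hΩ (ξN N) (hξN N)
  -- values agree: (ξN N).1 ⬝ᵥ sN N = (ξN N).1 ⬝ᵥ xN N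
  have hval : ∀ N, (ξN N).1 ⬝ᵥ sN N = (ξN N).1 ⬝ᵥ xN N := by
    intro N
    exact le_antisymm ((hxSol N).2 _ (hsN N).1) ((hsN N).2 _ (hxSol N).1)
  have hp : Tendsto (fun N => (ξN N).1) atTop (nhds ξ.1) :=
    (continuous_fst.tendsto ξ).comp hconv
  rw [show (fun N => (ξN N).1 ⬝ᵥ sN N) = fun N => (ξN N).1 ⬝ᵥ xN N from funext hval]
  apply Filter.tendsto_of_subseq_tendsto
  intro ns hns
  obtain ⟨x, -, φ, hφ, hxt⟩ := tendsto_subseq_of_bounded hΩbd (fun k => hxΩ (ns k))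
  refine ⟨φ, ?_⟩
  have hns' : Tendsto (fun k => ns (φ k)) atTop atTop := hns.comp hφ.tendsto_atTop
  have hxSol' : x ∈ Sol ξ.1 ξ.2.1 ξ.2.2 :=
    husc ξ hξ (fun k => ξN (ns (φ k))) (fun k => hξN _) (hconv.comp hns') x
      (fun k => xN (ns (φ k))) hxt (fun k => hxSol _)
  have hveq : ξ.1 ⬝ᵥ s = ξ.1 ⬝ᵥ x :=
    le_antisymm (hxSol'.2 _ hs.1) (hs.2 _ hxSol'.1)
  rw [hveq]
  have hp' : Tendsto (fun k => (ξN (ns (φ k))).1) atTop (nhds ξ.1) := hp.comp hns'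
  have : Tendsto (fun k => (ξN (ns (φ k))).1 ⬝ᵥ xN (ns (φ k))) atTop (nhds (ξ.1 ⬝ᵥ x)) := by
    simp only [dotProduct]
    exact tendsto_finset_sum _ fun i _ =>
      (((continuous_apply i).tendsto ξ.1).comp hp').mul
        (((continuous_apply i).tendsto x).comp hxt)
  exact this
end

section
/- Let 𝒳 be a domain of m×n LP problems that is weakly solution-wise bounded for the primal (there exists a bounded set Ω ⊆ ℝ^n such that Ω ∩ S(ξ) ≠ ∅ for every ξ ∈ 𝒳) and on which the solution correspondence S is upper semicontinuous. If ξ ∈ 𝒳 is singleton-solvable (S(ξ) is a singleton), then S is lower semicontinuous at ξ: for every sequence ξ(N) in 𝒳 converging to ξ and the unique x ∈ S(ξ), there exists a sequence x(N) converging to x with x(N) ∈ S(ξ(N)) for all N. -/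
open Matrix Filter Topology

/-- If the domain 𝒳 is weakly solution-wise bounded for the primal, S is upper
semicontinuous on 𝒳, and ξ ∈ 𝒳 is singleton-solvable, then S is lower semicontinuous at ξ:
for every sequence ξ(N) in 𝒳 converging to ξ and the unique x ∈ S(ξ), there is a sequence
x(N) → x with x(N) ∈ S(ξ(N)) for all N. -/
theorem solution_lsc_of_singleton_solvable {m n : ℕ}
    (𝒳 : Set (LP m n)) (h𝒳 : 𝒳.Nonempty)
    (hdom : ∀ ξ ∈ 𝒳, (Sol ξ.1 ξ.2.1 ξ.2.2).Nonempty)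
    (Ω : Set (Fin n → ℝ)) (hΩbd : Bornology.IsBounded Ω)
    (hΩ : ∀ ξ ∈ 𝒳, (Ω ∩ Sol ξ.1 ξ.2.1 ξ.2.2).Nonempty)
    (husc : ∀ ξ ∈ 𝒳, ∀ ξN : ℕ → LP m n, (∀ N, ξN N ∈ 𝒳) →
      Tendsto ξN atTop (nhds ξ) →
      ∀ x : Fin n → ℝ, ∀ xN : ℕ → Fin n → ℝ,
      Tendsto xN atTop (nhds x) →
      (∀ N, xN N ∈ Sol (ξN N).1 (ξN N).2.1 (ξN N).2.2) →
      x ∈ Sol ξ.1 ξ.2.1 ξ.2.2)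
    (ξ : LP m n) (hξ : ξ ∈ 𝒳)
    (x : Fin n → ℝ) (hsing : Sol ξ.1 ξ.2.1 ξ.2.2 = {x})
    (ξN : ℕ → LP m n) (hmem : ∀ N, ξN N ∈ 𝒳)
    (hconv : Tendsto ξN atTop (nhds ξ)) :
    ∃ xN : ℕ → Fin n → ℝ,
      Tendsto xN atTop (nhds x) ∧ ∀ N, xN N ∈ Sol (ξN N).1 (ξN N).2.1 (ξN N).2.2 := by
  choose xN hxNΩ hxNSol using fun N => hΩ (ξN N) (hmem N)
  refine ⟨xN, ?_, hxNSol⟩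
  -- closure of Ω is compact
  have hK : IsCompact (closure Ω) := hΩbd.isCompact_closure
  apply Filter.tendsto_of_subseq_tendsto
  intro ns hns
  obtain ⟨y, _, φ, hφ, hyt⟩ :=
    hK.tendsto_subseq (x := fun N => xN (ns N)) (fun N => subset_closure (hxNΩ (ns N)))
  refine ⟨φ, ?_⟩
  have hcomp : Tendsto (fun N => ξN (ns (φ N))) atTop (nhds ξ) :=
    hconv.comp (hns.comp hφ.tendsto_atTop)
  have hy : y ∈ Sol ξ.1 ξ.2.1 ξ.2.2 :=
    husc ξ hξ (fun N => ξN (ns (φ N))) (fun N => hmem _) hcomp y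
      (fun N => xN (ns (φ N))) hyt (fun N => hxNSol _)
  rw [hsing, Set.mem_singleton_iff] at hy
  subst hy
  exact hyt
end

section
/- Right-hand-side sensitivity with a fixed basis: let (p, A, b) be an m×n LP problem, and let x ∈ S(p, A, b) be a nondegenerate basic optimal solution, i.e. the set {j : x_j > 0} has exactly m elements, the corresponding m×m submatrix B of A is invertible, x_B = B⁻¹b ≫ 0 (all coordinates strictly positive), and yᵀ = p_Bᵀ B⁻¹ satisfies yᵀA ≥ pᵀ, where p_B is the subvector of p indexed by {j : x_j > 0}. Let Δb ∈ ℝ^m be nonzero. Then there exist real numbers θ₋ < 0 < θ₊ such that for every θ ∈ [θ₋, θ₊], the vector x(θ) which equals B⁻¹(b + θΔb) on the coordinates {j : x_j > 0} and is zero elsewhere belongs to S(p, A, b + θΔb), and consequently V(p, A, b + θΔb) = V(p, A, b) + θ · p_Bᵀ B⁻¹ Δb; in particular V is an affine (differentiable) function of θ on this interval with constant derivative p_Bᵀ B⁻¹ Δb. -/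
open Matrix

/-- Right-hand-side sensitivity with a fixed basis: if x ∈ S(p, A, b) is a nondegenerate
basic optimal solution with basis columns β : Fin m → Fin n (so {j : x_j > 0} = range β),
basis matrix B invertible, x_B = B⁻¹b ≫ 0, and yᵀ = p_Bᵀ B⁻¹ satisfies yᵀA ≥ pᵀ, then for
any nonzero Δb there are θ₋ < 0 < θ₊ such that for all θ ∈ [θ₋, θ₊] the vector equal to
B⁻¹(b + θΔb) on the basic coordinates and 0 elsewhere lies in S(p, A, b + θΔb), and its
value is V(p, A, b) + θ · p_Bᵀ B⁻¹ Δb: V is affine in θ on this interval. -/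
theorem rhs_sensitivity {m n : ℕ}
    (p : Fin n → ℝ) (A : Matrix (Fin m) (Fin n) ℝ) (b : Fin m → ℝ)
    (x : Fin n → ℝ) (hx : x ∈ Sol p A b)
    (β : Fin m → Fin n) (hβinj : Function.Injective β)
    (hsupp : ∀ j, 0 < x j ↔ ∃ i, β i = j)
    (B : Matrix (Fin m) (Fin m) ℝ) (hBdef : B = fun i k => A i (β k))
    (hBinv : IsUnit B.det)
    (hxB : ∀ k, x (β k) = B⁻¹.mulVec b k)
    (hpos : ∀ k, 0 < B⁻¹.mulVec b k)
    (hdual : ∀ j, p j ≤ (B⁻¹)ᵀ.mulVec (fun k => p (β k)) ⬝ᵥ fun i => A i j)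
    (Δb : Fin m → ℝ) (hΔb : Δb ≠ 0) :
    ∃ θm θp : ℝ, θm < 0 ∧ 0 < θp ∧
      ∀ θ ∈ Set.Icc θm θp,
        (fun j => ∑ k, if β k = j then B⁻¹.mulVec (b + θ • Δb) k else 0) ∈
          Sol p A (b + θ • Δb) ∧
        (p ⬝ᵥ fun j => ∑ k, if β k = j then B⁻¹.mulVec (b + θ • Δb) k else 0) =
          p ⬝ᵥ x + θ * ((fun k => p (β k)) ⬝ᵥ B⁻¹.mulVec Δb) := by
  obtain ⟨⟨hxnn, hxeq⟩, hxopt⟩ := hx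
  haveI : Nonempty (Fin m) := by
    by_contra h
    exact hΔb (funext fun i => absurd ⟨i⟩ h)
  set c : Fin m → ℝ := B⁻¹.mulVec b with hc
  set d : Fin m → ℝ := B⁻¹.mulVec Δb with hd
  set pB : Fin m → ℝ := fun k => p (β k) with hpB
  set ε : ℝ := Finset.univ.inf' Finset.univ_nonempty (fun k => c k / (|d k| + 1)) with hεdef
  have hε : 0 < ε := by
    rw [hεdef, Finset.lt_inf'_iff]
    exact fun k _ => div_pos (hpos k) (by positivity)
  -- nonnegativity of basic variables for small θ
  have key : ∀ θ : ℝ, |θ| ≤ ε → ∀ k, 0 ≤ c k + θ * d k := by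
    intro θ hθ k
    have h1 : ε ≤ c k / (|d k| + 1) := Finset.inf'_le _ (Finset.mem_univ k)
    have h2 : |θ * d k| ≤ c k := by
      rw [abs_mul]
      calc |θ| * |d k| ≤ (c k / (|d k| + 1)) * |d k| :=
            mul_le_mul (hθ.trans h1) le_rfl (abs_nonneg _) (div_nonneg (hpos k).le (by positivity))
        _ ≤ c k := by
            rw [div_mul_eq_mul_div, div_le_iff₀ (by positivity)]
            nlinarith [hpos k, abs_nonneg (d k)]
    linarith [neg_abs_le (θ * d k), abs_nonneg (θ * d k)]
  -- dot product helper
  have hdot : ∀ (u : Fin n → ℝ) (v : Fin m → ℝ),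
      (u ⬝ᵥ fun j => ∑ k, if β k = j then v k else 0) = ∑ k, u (β k) * v k := by
    intro u v
    simp only [dotProduct, Finset.mul_sum]
    rw [Finset.sum_comm]
    exact Finset.sum_congr rfl fun k _ => by simp [mul_ite, Finset.sum_ite_eq]
  -- A applied to the padded vector equals B applied to v
  have hmul : ∀ v : Fin m → ℝ,
      A.mulVec (fun j => ∑ k, if β k = j then v k else 0) = B.mulVec v := by
    intro v
    funext i
    show (fun j => A i j) ⬝ᵥ _ = B i ⬝ᵥ v
    rw [hdot]
    simp [dotProduct, hBdef]
  have hBB : ∀ w : Fin m → ℝ, B.mulVec (B⁻¹.mulVec w) = w := by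
    intro w
    rw [mulVec_mulVec, Matrix.mul_nonsing_inv _ hBinv, one_mulVec]
  -- dual vector identity
  have hyw : ∀ w : Fin m → ℝ, (B⁻¹)ᵀ.mulVec pB ⬝ᵥ w = pB ⬝ᵥ B⁻¹.mulVec w := by
    intro w
    rw [Matrix.mulVec_transpose, ← Matrix.dotProduct_mulVec]
  -- x equals the padded vector of c
  have hxc : x = fun j => ∑ k, if β k = j then c k else 0 := by
    funext j
    by_cases hj : ∃ i, β i = j
    · obtain ⟨i, hi⟩ := hj
      have heq : ∀ k, (β k = j) = (k = i) := fun k => by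
        rw [← hi]
        exact propext ⟨fun h => hβinj h, fun h => h ▸ rfl⟩
      simp only [heq, Finset.sum_ite_eq', Finset.mem_univ, if_true]
      rw [← hi, hxB]
    · have hx0 : x j = 0 := le_antisymm (by
        by_contra h
        exact hj ((hsupp j).mp (not_le.mp h))) (hxnn j)
      rw [hx0]
      rw [Finset.sum_eq_zero]
      intro k _
      rw [if_neg (fun h => hj ⟨k, h⟩)]
  have hpx : p ⬝ᵥ x = pB ⬝ᵥ c := by
    rw [hxc, hdot]
    rfl
  refine ⟨-ε, ε, by linarith, hε, ?_⟩
  intro θ hθ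
  have hθabs : |θ| ≤ ε := abs_le.mpr ⟨hθ.1, hθ.2⟩
  have hv : B⁻¹.mulVec (b + θ • Δb) = fun k => c k + θ * d k := by
    funext k
    rw [mulVec_add, mulVec_smul]
    simp [hc, hd]
  have hnn : ∀ k, 0 ≤ B⁻¹.mulVec (b + θ • Δb) k := by
    intro k
    rw [hv]
    exact key θ hθabs k
  have hfeas : (fun j => ∑ k, if β k = j then B⁻¹.mulVec (b + θ • Δb) k else 0) ∈
      Feas A (b + θ • Δb) := by
    constructor
    · intro j
      apply Finset.sum_nonneg
      intro k _
      split
      · exact hnn k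
      · exact le_rfl
    · rw [hmul, hBB]
  have hval : (p ⬝ᵥ fun j => ∑ k, if β k = j then B⁻¹.mulVec (b + θ • Δb) k else 0) =
      pB ⬝ᵥ B⁻¹.mulVec (b + θ • Δb) := by
    rw [hdot]
    rfl
  have hval2 : pB ⬝ᵥ B⁻¹.mulVec (b + θ • Δb) = p ⬝ᵥ x + θ * (pB ⬝ᵥ d) := by
    rw [hv, hpx]
    simp only [dotProduct, Finset.mul_sum]
    rw [← Finset.sum_add_distrib]
    exact Finset.sum_congr rfl fun k _ => by ring
  refine ⟨⟨hfeas, ?_⟩, by rw [hval, hval2]⟩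
  intro x' hx'
  obtain ⟨hx'nn, hx'eq⟩ := hx'
  have hub : p ⬝ᵥ x' ≤ (B⁻¹)ᵀ.mulVec pB ⬝ᵥ (b + θ • Δb) := by
    calc p ⬝ᵥ x' ≤ A.vecMul ((B⁻¹)ᵀ.mulVec pB) ⬝ᵥ x' := by
          apply Finset.sum_le_sum
          intro j _
          exact mul_le_mul_of_nonneg_right (hdual j) (hx'nn j)
      _ = (B⁻¹)ᵀ.mulVec pB ⬝ᵥ A.mulVec x' := (Matrix.dotProduct_mulVec _ _ _).symm
      _ = (B⁻¹)ᵀ.mulVec pB ⬝ᵥ (b + θ • Δb) := by rw [hx'eq]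
  rw [hval, ← hyw]
  exact hub
end
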